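/- arXiv:2204.08572 — 2 statements merged into one kernel-verified Lean document; each statement's English description precedes it below -/
import Mathlib

section
/- Let f: ℝᵈ → ℝ be differentiable and m-strongly convex, and c(x,x') = (x-x')ᵀQ(x-x') with Q symmetric positive definite. If xₜ minimizes x ↦ f(x) + λ₁c(x,xₜ₋₁) + λ₂c(x,vₜ) + λ₃c(x,x̃ₜ) over ℝᵈ, then for any point x*ₜ: f(x*ₜ) + λ₁c(x*ₜ,xₜ₋₁) + λ₂c(x*ₜ,vₜ) + λ₃c(x*ₜ,x̃ₜ) ≥ f(xₜ) + λ₁c(xₜ,xₜ₋₁) + (λ₁+λ₂+λ₃)·c(xₜ,x*ₜ) + (m/2)‖x*ₜ − xₜ‖². -/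
open Matrix Finset

/-- `m`-strong convexity of `f` on `ℝᵈ` (with respect to the Euclidean norm). -/
def StronglyConvexVec {d : ℕ} (m : ℝ) (f : (Fin d → ℝ) → ℝ) : Prop :=
  ∀ x y : Fin d → ℝ, ∀ a b : ℝ, 0 ≤ a → 0 ≤ b → a + b = 1 →
    f (a • x + b • y) ≤ a * f x + b * f y - m / 2 * a * b * ∑ i, (x i - y i) ^ 2

/-- Squared Mahalanobis distance `c(x,y) = (x-y)ᵀQ(x-y)`. -/
noncomputable def mahal {d : ℕ} (Q : Matrix (Fin d) (Fin d) ℝ) (x y : Fin d → ℝ) : ℝ :=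
  (x - y) ⬝ᵥ Q *ᵥ (x - y)

open Filter Topology

/- Strong convexity of `f` and the identity
`c(a x + (1-a) y, p) = a c(x,p) + (1-a) c(y,p) - a(1-a) c(x,y)` show that the objective `F`
satisfies `F(a x* + (1-a) xₜ) ≤ a F(x*) + (1-a) F(xₜ) - a(1-a) K` with
`K = (λ₁+λ₂+λ₃) c(xₜ,x*) + (m/2)‖x* - xₜ‖²`. Comparing with the minimality of `xₜ`, dividing by `a`
and letting `a → 0` gives `F(xₜ) + K ≤ F(x*)`; the terms `λ₂ c(xₜ,vₜ)` and `λ₃ c(xₜ,x̃ₜ)` are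
nonnegative and can be dropped. -/

lemma add_le_of_forall_le_of_le_segment {E : Type*} [AddCommGroup E] [Module ℝ E]
    {F : E → ℝ} {x y : E} {K : ℝ} (hmin : ∀ z, F y ≤ F z)
    (hseg : ∀ a : ℝ, 0 < a → a ≤ 1 →
      F (a • x + (1 - a) • y) ≤ a * F x + (1 - a) * F y - a * (1 - a) * K) :
    F y + K ≤ F x := by
  have hdiv : ∀ a : ℝ, 0 < a → a ≤ 1 → F y + (1 - a) * K ≤ F x := fun a ha ha1 => by
    have h := (hmin _).trans (hseg a ha ha1)
    nlinarith
  have hlim : Tendsto (fun a : ℝ => F y + (1 - a) * K) (𝓝[>] 0) (𝓝 (F y + (1 - 0) * K)) :=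
    tendsto_nhdsWithin_of_tendsto_nhds (by fun_prop : Continuous _).continuousAt
  rw [sub_zero, one_mul] at hlim
  refine le_of_tendsto hlim ?_
  filter_upwards [Ioc_mem_nhdsGT one_pos] with a ha using hdiv a ha.1 ha.2

section Mahalanobis

variable {d : ℕ}

lemma mahal_nonneg {Q : Matrix (Fin d) (Fin d) ℝ} (hQ : Q.PosSemidef) (x y : Fin d → ℝ) :
    0 ≤ mahal Q x y :=
  hQ.dotProduct_mulVec_nonneg (x - y)

lemma mahal_comm (Q : Matrix (Fin d) (Fin d) ℝ) (x y : Fin d → ℝ) :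
    mahal Q x y = mahal Q y x := by
  unfold mahal
  rw [← neg_sub x y, mulVec_neg, dotProduct_neg, neg_dotProduct, neg_neg]

lemma mahal_smul_add_smul (Q : Matrix (Fin d) (Fin d) ℝ) {a b : ℝ} (hab : a + b = 1)
    (x y p : Fin d → ℝ) :
    mahal Q (a • x + b • y) p = a * mahal Q x p + b * mahal Q y p - a * b * mahal Q x y := by
  obtain rfl : b = 1 - a := by linarith
  have hcomb : (a • x + (1 - a) • y) - p = a • (x - p) + (1 - a) • (y - p) := by module
  have hxy : x - y = (x - p) - (y - p) := by module
  rw [mahal, mahal, mahal, mahal, hcomb, hxy]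
  simp only [mulVec_add, mulVec_smul, mulVec_sub, dotProduct_add, add_dotProduct,
    dotProduct_smul, smul_dotProduct, dotProduct_sub, sub_dotProduct, smul_eq_mul]
  ring

end Mahalanobis

theorem mla_robd_step_inequality_general {d : ℕ} (m lam1 lam2 lam3 : ℝ)
    (h2 : 0 ≤ lam2) (h3 : 0 ≤ lam3)
    (Q : Matrix (Fin d) (Fin d) ℝ) (hQ : Q.PosDef)
    (f : (Fin d → ℝ) → ℝ) (hsc : StronglyConvexVec m f)
    (xprev v xtil xt xstar : Fin d → ℝ)
    (hmin : ∀ z : Fin d → ℝ,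
      f xt + lam1 * mahal Q xt xprev + lam2 * mahal Q xt v + lam3 * mahal Q xt xtil ≤
        f z + lam1 * mahal Q z xprev + lam2 * mahal Q z v + lam3 * mahal Q z xtil) :
    f xt + lam1 * mahal Q xt xprev + (lam1 + lam2 + lam3) * mahal Q xt xstar +
        m / 2 * ∑ i, (xstar i - xt i) ^ 2 ≤
      f xstar + lam1 * mahal Q xstar xprev + lam2 * mahal Q xstar v +
        lam3 * mahal Q xstar xtil := by
  have hgap := add_le_of_forall_le_of_le_segment
    (F := fun z => f z + lam1 * mahal Q z xprev + lam2 * mahal Q z v + lam3 * mahal Q z xtil)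
    (x := xstar)
    (K := (lam1 + lam2 + lam3) * mahal Q xstar xt + m / 2 * ∑ i, (xstar i - xt i) ^ 2)
    hmin fun a ha ha1 => by
      have hab : a + (1 - a) = 1 := by ring
      simp only [mahal_smul_add_smul Q hab]
      linarith [hsc xstar xt a (1 - a) ha.le (by linarith) hab]
  have hv := mul_nonneg h2 (mahal_nonneg hQ.posSemidef xt v)
  have htil := mul_nonneg h3 (mahal_nonneg hQ.posSemidef xt xtil)
  rw [mahal_comm Q xstar xt] at hgap
  linarith

/-- If `xₜ` minimizes `x ↦ f(x) + λ₁c(x,xₜ₋₁) + λ₂c(x,vₜ) + λ₃c(x,x̃ₜ)`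
with `f` differentiable and `m`-strongly convex, then for any `x*ₜ`:
`f(x*ₜ) + λ₁c(x*ₜ,xₜ₋₁) + λ₂c(x*ₜ,vₜ) + λ₃c(x*ₜ,x̃ₜ)
  ≥ f(xₜ) + λ₁c(xₜ,xₜ₋₁) + (λ₁+λ₂+λ₃)c(xₜ,x*ₜ) + (m/2)‖x*ₜ − xₜ‖²`. -/
theorem mla_robd_step_inequality {d : ℕ} (m lam1 lam2 lam3 : ℝ)
    (hm : 0 < m) (h1 : 0 < lam1) (h2 : 0 ≤ lam2) (h3 : 0 ≤ lam3)
    (Q : Matrix (Fin d) (Fin d) ℝ) (hQ : Q.PosDef)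
    (f : (Fin d → ℝ) → ℝ) (hdiff : Differentiable ℝ f) (hsc : StronglyConvexVec m f)
    (xprev v xtil xt xstar : Fin d → ℝ)
    (hmin : ∀ z : Fin d → ℝ,
      f xt + lam1 * mahal Q xt xprev + lam2 * mahal Q xt v + lam3 * mahal Q xt xtil ≤
        f z + lam1 * mahal Q z xprev + lam2 * mahal Q z v + lam3 * mahal Q z xtil) :
    f xt + lam1 * mahal Q xt xprev + (lam1 + lam2 + lam3) * mahal Q xt xstar +
        m / 2 * ∑ i, (xstar i - xt i) ^ 2 ≤
      f xstar + lam1 * mahal Q xstar xprev + lam2 * mahal Q xstar v +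
        lam3 * mahal Q xstar xtil :=
  mla_robd_step_inequality_general m lam1 lam2 lam3 h2 h3 Q hQ f hsc xprev v xtil xt xstar hmin
end

section
/- Let Q be symmetric positive definite with eigenvalues in [α/2, β/2], m > 0, and set q = m/(2β). Then for any xₜ, xₜ₋₁, xₜ^L ∈ ℝᵈ: q·c(xₜ^L, xₜ₋₁) − q·c(xₜ^L, xₜ) + (m/2)‖xₜ − xₜ^L‖² ≥ (q − βq²/m)·c(xₜ, xₜ₋₁) = (m/(4β))·c(xₜ, xₜ₋₁), where c(x,y) = (x-y)ᵀQ(x-y). -/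
/-!
Expanding `c(xᴸ, x')` around `x` leaves the cross term `2q ⟨Q(x - x'), xᴸ - x⟩` to be bounded
from below. Young's inequality bounds its absolute value by
`(2q²/m)‖Q(x - x')‖² + (m/2)‖x - xᴸ‖²`, and since the eigenvalues of `Q` lie in `[0, β/2]`,
`‖Qz‖² ≤ (β/2) zᵀQz`, which turns the first term into `(βq²/m) c(x, x')`.
-/

open Matrix Finset

open scoped MatrixOrder ComplexOrder

namespace Matrix

variable {n : Type*} [Fintype n] [DecidableEq n]

theorem PosSemidef.posSemidef_smul_sub_mul_self {𝕜 : Type*} [RCLike 𝕜] {A : Matrix n n 𝕜}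
    (hA : A.PosSemidef) {c : ℝ} (hc : ∀ i, hA.1.eigenvalues i ≤ c) :
    (c • A - A * A).PosSemidef := by
  have hcfc : cfc (fun x : ℝ => c * x - x ^ 2) A = c • A - A * A := by
    rw [cfc_sub .., cfc_const_mul_id .., cfc_pow_id .., sq]
  rw [← nonneg_iff_posSemidef, ← hcfc]
  refine cfc_nonneg fun x hx => ?_
  obtain ⟨i, rfl⟩ := hA.1.spectrum_real_eq_range_eigenvalues ▸ hx
  nlinarith [hA.eigenvalues_nonneg i, hc i]

theorem PosSemidef.mulVec_dotProduct_mulVec_le {A : Matrix n n ℝ} (hA : A.PosSemidef) {c : ℝ}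
    (hc : ∀ i, hA.1.eigenvalues i ≤ c) (v : n → ℝ) :
    (A *ᵥ v) ⬝ᵥ (A *ᵥ v) ≤ c * (v ⬝ᵥ A *ᵥ v) := by
  have h := (hA.posSemidef_smul_sub_mul_self hc).dotProduct_mulVec_nonneg v
  have hAA : v ⬝ᵥ (A * A) *ᵥ v = (A *ᵥ v) ⬝ᵥ (A *ᵥ v) := by
    rw [← mulVec_mulVec, dotProduct_mulVec, ← mulVec_transpose, isHermitian_iff_isSymm.mp hA.1]
  simp only [star_trivial, sub_mulVec, smul_mulVec, dotProduct_sub, dotProduct_smul, smul_eq_mul,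
    hAA] at h
  linarith

end Matrix

theorem dotProduct_young_nonneg {n : Type*} [Fintype n] {m : ℝ} (hm : 0 < m) (q : ℝ)
    (u w : n → ℝ) : 0 ≤ 2 * q * (u ⬝ᵥ w) + 2 * q ^ 2 / m * (u ⬝ᵥ u) + m / 2 * (w ⬝ᵥ w) := by
  have h := mul_nonneg (half_pos hm).le (dotProduct_self_star_nonneg (w + (2 * q / m) • u))
  simp only [star_trivial, add_dotProduct, dotProduct_add, smul_dotProduct, dotProduct_smul,
    smul_eq_mul, dotProduct_comm w u] at h
  refine h.trans_eq ?_
  field_simp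
  ring

theorem mahal_sub_mahal {d : ℕ} {Q : Matrix (Fin d) (Fin d) ℝ} (hQ : Q.IsSymm)
    (x x' xL : Fin d → ℝ) :
    mahal Q xL x' - mahal Q xL x = mahal Q x x' + 2 * ((Q *ᵥ (x - x')) ⬝ᵥ (xL - x)) := by
  have hcross : (xL - x) ⬝ᵥ Q *ᵥ (x - x') = (Q *ᵥ (x - x')) ⬝ᵥ (xL - x) := dotProduct_comm _ _
  have hcross' : (x - x') ⬝ᵥ Q *ᵥ (xL - x) = (Q *ᵥ (x - x')) ⬝ᵥ (xL - x) := by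
    rw [dotProduct_mulVec, ← mulVec_transpose, hQ.eq]
  have hsplit : xL - x' = (x - x') + (xL - x) := by abel
  simp only [mahal, hsplit, mulVec_add, dotProduct_add, add_dotProduct, hcross, hcross']
  ring

theorem mahal_young_bound {d : ℕ} {m β : ℝ} (hm : 0 < m) {Q : Matrix (Fin d) (Fin d) ℝ}
    (hQ : Q.PosSemidef) (hβ : ∀ i, hQ.1.eigenvalues i ≤ β / 2) (q : ℝ) (x x' xL : Fin d → ℝ) :
    (q - β * q ^ 2 / m) * mahal Q x x' ≤
      q * mahal Q xL x' - q * mahal Q xL x + m / 2 * ∑ i, (x i - xL i) ^ 2 := by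
  have hyoung := dotProduct_young_nonneg hm q (Q *ᵥ (x - x')) (xL - x)
  have hspec : 2 * q ^ 2 / m * ((Q *ᵥ (x - x')) ⬝ᵥ (Q *ᵥ (x - x'))) ≤
      β * q ^ 2 / m * mahal Q x x' := by
    calc _ ≤ 2 * q ^ 2 / m * (β / 2 * mahal Q x x') :=
          mul_le_mul_of_nonneg_left (hQ.mulVec_dotProduct_mulVec_le hβ _) (by positivity)
      _ = β * q ^ 2 / m * mahal Q x x' := by ring
  have hsum : ∑ i, (x i - xL i) ^ 2 = (xL - x) ⬝ᵥ (xL - x) := by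
    simp only [dotProduct, Pi.sub_apply]
    exact sum_congr rfl fun i _ => by ring
  rw [← mul_sub, mahal_sub_mahal (isHermitian_iff_isSymm.mp hQ.1), hsum]
  linear_combination hyoung + hspec

theorem regret_auxiliary_bound_general {d : ℕ} (m α β : ℝ) (hm : 0 < m)
    (Q : Matrix (Fin d) (Fin d) ℝ) (hQ : Q.PosDef)
    (heig : ∀ i, α / 2 ≤ hQ.isHermitian.eigenvalues i ∧ hQ.isHermitian.eigenvalues i ≤ β / 2)
    (xt xprev xL : Fin d → ℝ) :
    (m / (2 * β) - β * (m / (2 * β)) ^ 2 / m) * mahal Q xt xprev ≤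
        m / (2 * β) * mahal Q xL xprev - m / (2 * β) * mahal Q xL xt +
          m / 2 * ∑ i, (xt i - xL i) ^ 2 ∧
      (m / (2 * β) - β * (m / (2 * β)) ^ 2 / m) * mahal Q xt xprev =
        m / (4 * β) * mahal Q xt xprev := by
  refine ⟨mahal_young_bound hm hQ.posSemidef (fun i => (heig i).2) _ xt xprev xL, ?_⟩
  congr 1
  rcases eq_or_ne β 0 with rfl | hβ
  · simp
  field_simp
  ring

/-- With `q = m/(2β)` and `Q` symmetric positive definite with eigenvalues
in `[α/2, β/2]`, for any `xₜ, xₜ₋₁, xₜ^L`: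
`q·c(xₜ^L,xₜ₋₁) − q·c(xₜ^L,xₜ) + (m/2)‖xₜ − xₜ^L‖² ≥ (q − βq²/m)·c(xₜ,xₜ₋₁)`,
and `(q − βq²/m)·c(xₜ,xₜ₋₁) = (m/(4β))·c(xₜ,xₜ₋₁)`. -/
theorem regret_auxiliary_bound {d : ℕ} (m α β : ℝ) (hm : 0 < m) (hα : 0 < α)
    (Q : Matrix (Fin d) (Fin d) ℝ) (hQ : Q.PosDef)
    (heig : ∀ i, α / 2 ≤ hQ.isHermitian.eigenvalues i ∧ hQ.isHermitian.eigenvalues i ≤ β / 2)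
    (xt xprev xL : Fin d → ℝ) :
    (m / (2 * β) - β * (m / (2 * β)) ^ 2 / m) * mahal Q xt xprev ≤
        m / (2 * β) * mahal Q xL xprev - m / (2 * β) * mahal Q xL xt +
          m / 2 * ∑ i, (xt i - xL i) ^ 2 ∧
      (m / (2 * β) - β * (m / (2 * β)) ^ 2 / m) * mahal Q xt xprev =
        m / (4 * β) * mahal Q xt xprev :=
  regret_auxiliary_bound_general m α β hm Q hQ heig xt xprev xL
end
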